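/- Let X be a real random variable with E[|X|⁵] < ∞, and for ν > 0 set μ̃(ν) = 2·E[X/(1 + X²/ν)] − E[X/(1 + 2X²/ν)] and μ̃̃(ν) = 2μ̃(ν) − μ̃(ν/2). Then ν²·[(2/3)·μ̃(ν) + (1/3)·μ̃̃(ν) − E[X]] → 0 as ν → ∞; that is, the average (2/3)μ̃(ν) + (1/3)μ̃̃(ν) equals E[X] + o(ν^{-2}). -/

import Mathlib

/-!
Expanding `x / (1 + x²/ν) = x - x³/ν + (x⁵ / (1 + x²/ν)) / ν²` gives
`μ(ν) = E[X] - E[X³]/ν + R(ν)/ν²`, where `R(ν) = E[X⁵ / (1 + X²/ν)] → E[X⁵]` by dominated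
convergence (dominated by `|X|⁵`). In terms of `μ`, the average is
`(8/3)μ(ν) - 2μ(ν/2) + (1/3)μ(ν/4)`: its weights sum to `1` and annihilate the `ν⁻¹` term, so
`ν²` times its error is `(8/3)R(ν) - 8R(ν/2) + (16/3)R(ν/4)`, whose weights sum to `0`.
-/

open MeasureTheory Filter Topology

/-- Population robust location estimand `μ(ν) = E[X/(1 + X²/ν)]`. -/
noncomputable def robustMu {Ω : Type*} [MeasurableSpace Ω] (P : Measure Ω)
    (X : Ω → ℝ) (ν : ℝ) : ℝ :=
  ∫ ω, X ω / (1 + (X ω) ^ 2 / ν) ∂P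

/-- Richardson-corrected estimand `μ̃(ν) = 2μ(ν) − μ(ν/2)
  = 2·E[X/(1 + X²/ν)] − E[X/(1 + 2X²/ν)]`. -/
noncomputable def robustMuTilde {Ω : Type*} [MeasurableSpace Ω] (P : Measure Ω)
    (X : Ω → ℝ) (ν : ℝ) : ℝ :=
  2 * robustMu P X ν - robustMu P X (ν / 2)

/-- Twice-corrected estimand `μ̃̃(ν) = 2μ̃(ν) − μ̃(ν/2)`. -/
noncomputable def robustMuTildeTilde {Ω : Type*} [MeasurableSpace Ω] (P : Measure Ω)
    (X : Ω → ℝ) (ν : ℝ) : ℝ :=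
  2 * robustMuTilde P X ν - robustMuTilde P X (ν / 2)

lemma abs_div_one_add_sq_div_le (x y : ℝ) {ν : ℝ} (hν : 0 ≤ ν) :
    |y / (1 + x ^ 2 / ν)| ≤ |y| := by
  have hd : 1 ≤ 1 + x ^ 2 / ν := le_add_of_nonneg_right (by positivity)
  rw [abs_div, abs_of_pos (by linarith : 0 < 1 + x ^ 2 / ν)]
  exact div_le_self (abs_nonneg y) hd

lemma div_one_add_sq_div_eq (x : ℝ) {ν : ℝ} (hν : 0 < ν) :
    x / (1 + x ^ 2 / ν) = x - x ^ 3 / ν + x ^ 5 / (1 + x ^ 2 / ν) / ν ^ 2 := by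
  have hd : 1 + x ^ 2 / ν ≠ 0 := by positivity
  field_simp
  ring

section Moments

variable {Ω : Type*} [MeasurableSpace Ω] {P : Measure Ω} {X : Ω → ℝ}

lemma integrable_pow_of_integrable_abs_pow [IsFiniteMeasure P] (hX : AEMeasurable X P)
    {k n : ℕ} (hkn : k ≤ n) (hn : Integrable (fun ω => |X ω| ^ n) P) :
    Integrable (fun ω => X ω ^ k) P := by
  simp only [← Real.norm_eq_abs] at hn
  refine (integrable_norm_pow_of_le hX.aestronglyMeasurable hkn hn).mono'
    (hX.pow_const k).aestronglyMeasurable (Eventually.of_forall fun ω => ?_)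
  rw [norm_pow]

lemma integrable_pow_five_div_one_add_sq_div (hX : AEMeasurable X P)
    (h5 : Integrable (fun ω => |X ω| ^ 5) P) {ν : ℝ} (hν : 0 ≤ ν) :
    Integrable (fun ω => X ω ^ 5 / (1 + X ω ^ 2 / ν)) P :=
  h5.mono' ((hX.pow_const 5).div (aemeasurable_const.add
      ((hX.pow_const 2).div_const ν))).aestronglyMeasurable
    (Eventually.of_forall fun ω => by
      rw [Real.norm_eq_abs, ← abs_pow]
      exact abs_div_one_add_sq_div_le (X ω) (X ω ^ 5) hν)

lemma tendsto_integral_pow_five_div_one_add_sq_div (hX : AEMeasurable X P)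
    (h5 : Integrable (fun ω => |X ω| ^ 5) P) :
    Tendsto (fun ν : ℝ => ∫ ω, X ω ^ 5 / (1 + X ω ^ 2 / ν) ∂P) atTop
      (𝓝 (∫ ω, X ω ^ 5 ∂P)) := by
  refine tendsto_integral_filter_of_dominated_convergence (fun ω => |X ω| ^ 5) ?_ ?_ h5 ?_
  · filter_upwards [eventually_ge_atTop 0] with ν hν
    exact (integrable_pow_five_div_one_add_sq_div hX h5 hν).aestronglyMeasurable
  · filter_upwards [eventually_ge_atTop 0] with ν hν
    exact Eventually.of_forall fun ω => by
      rw [Real.norm_eq_abs, ← abs_pow]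
      exact abs_div_one_add_sq_div_le (X ω) (X ω ^ 5) hν
  · refine Eventually.of_forall fun ω => ?_
    have hdenom : Tendsto (fun ν : ℝ => 1 + X ω ^ 2 / ν) atTop (𝓝 1) := by
      simpa using (tendsto_const_nhds (x := (1 : ℝ))).add
        (tendsto_const_nhds.div_atTop tendsto_id)
    simpa [Pi.div_def] using (tendsto_const_nhds (x := X ω ^ 5)).div hdenom one_ne_zero

lemma robustMu_eq_expansion (hX : AEMeasurable X P) (h1 : Integrable X P)
    (h3 : Integrable (fun ω => X ω ^ 3) P) (h5 : Integrable (fun ω => |X ω| ^ 5) P)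
    {ν : ℝ} (hν : 0 < ν) :
    robustMu P X ν = ∫ ω, X ω ∂P - (∫ ω, X ω ^ 3 ∂P) / ν
      + (∫ ω, X ω ^ 5 / (1 + X ω ^ 2 / ν) ∂P) / ν ^ 2 := by
  have h13 : Integrable (fun ω => X ω - X ω ^ 3 / ν) P := h1.sub (h3.div_const ν)
  rw [robustMu, integral_congr_ae (Eventually.of_forall fun ω => div_one_add_sq_div_eq (X ω) hν),
    integral_add h13 ((integrable_pow_five_div_one_add_sq_div hX h5 hν.le).div_const _),
    integral_sub h1 (h3.div_const ν), integral_div, integral_div]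

end Moments

lemma tendsto_sq_mul_averaged_richardson_sub {Ω : Type*} [MeasurableSpace Ω] {P : Measure Ω}
    {X : Ω → ℝ} {a b L : ℝ} {R : ℝ → ℝ}
    (hμ : ∀ ν, 0 < ν → robustMu P X ν = a - b / ν + R ν / ν ^ 2)
    (hR : Tendsto R atTop (𝓝 L)) :
    Tendsto (fun ν : ℝ => ν ^ 2 *
        ((2 / 3) * robustMuTilde P X ν + (1 / 3) * robustMuTildeTilde P X ν - a))
      atTop (𝓝 0) := by
  have hcombination : ∀ ν, 0 < ν →
      (8 / 3) * R ν - 8 * R (ν / 2) + (16 / 3) * R (ν / 2 / 2) = ν ^ 2 *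
        ((2 / 3) * robustMuTilde P X ν + (1 / 3) * robustMuTildeTilde P X ν - a) := by
    intro ν hν
    rw [robustMuTildeTilde, robustMuTilde, robustMuTilde, hμ ν hν, hμ (ν / 2) (by positivity),
      hμ (ν / 2 / 2) (by positivity)]
    field_simp
    ring
  have hhalf : Tendsto (fun ν : ℝ => ν / 2) atTop atTop := tendsto_id.atTop_div_const two_pos
  have hlim := ((hR.const_mul (8 / 3)).sub ((hR.comp hhalf).const_mul 8)).add
    ((hR.comp (hhalf.comp hhalf)).const_mul (16 / 3))
  rw [show 8 / 3 * L - 8 * L + 16 / 3 * L = 0 by ring] at hlim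
  exact hlim.congr' (eventually_gt_atTop 0 |>.mono hcombination)

/-- If `E[|X|⁵] < ∞`, the average `(2/3)μ̃(ν) + (1/3)μ̃̃(ν)` equals `E[X] + o(ν⁻²)`:
`ν²·[(2/3)μ̃(ν) + (1/3)μ̃̃(ν) − E[X]] → 0` as `ν → ∞`. -/
theorem averaged_richardson_higher_order {Ω : Type*} [MeasurableSpace Ω]
    (P : Measure Ω) [IsProbabilityMeasure P]
    {X : Ω → ℝ} (hXmeas : Measurable X)
    (h5 : Integrable (fun ω => |X ω| ^ 5) P) :
    Filter.Tendsto
      (fun ν : ℝ => ν ^ 2 *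
        ((2 / 3) * robustMuTilde P X ν + (1 / 3) * robustMuTildeTilde P X ν
          - ∫ ω, X ω ∂P))
      Filter.atTop (nhds 0) := by
  have hX := hXmeas.aemeasurable (μ := P)
  have h1 : Integrable X P := by
    simpa using integrable_pow_of_integrable_abs_pow hX (by norm_num : 1 ≤ 5) h5
  have h3 := integrable_pow_of_integrable_abs_pow hX (by norm_num : 3 ≤ 5) h5
  exact tendsto_sq_mul_averaged_richardson_sub (fun ν hν => robustMu_eq_expansion hX h1 h3 h5 hν)
    (tendsto_integral_pow_five_div_one_add_sq_div hX h5)
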